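/- arXiv:1512.03539 — 2 statements merged into one kernel-verified Lean document; each statement's English description precedes it below -/
import Mathlib

section
/- Let W : [0,∞) → [0,∞) be differentiable and satisfy W'(t) ≤ −λ W(t) + K W(t)^{3/2} for all t, with λ > 0, K > 0. If W(0) < (λ/(2K))², then W(t) ≤ e^{−λ t/2} W(0) for all t ≥ 0. (Local exponential stability from the cubic-perturbed Lyapunov inequality.) -/
/-!
While `W < (λ / (2K))²` we have `K √W < λ / 2`, so the cubic term eats at most half of the linear
decay and `W' ≤ -(λ / 2) W`. Comparison with the exponential then gives
`W t ≤ exp (-λ t / 2) W 0 ≤ W 0`, so `W` can never reach the threshold (first exit time argument)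
and the estimate holds for all `t ≥ 0`.
-/

open Real Set

/-- Comparison with `f' = c f`: the weight `exp (-c t)` turns the differential inequality into
antitonicity of `t ↦ f t * exp (-c * t)`. -/
theorem le_exp_mul_sub_mul_of_deriv_le {f : ℝ → ℝ} {c a b : ℝ} (hab : a ≤ b)
    (hcont : ContinuousOn f (Icc a b)) (hdiff : DifferentiableOn ℝ f (Ioo a b))
    (hderiv : ∀ x ∈ Ioo a b, deriv f x ≤ c * f x) :
    f b ≤ exp (c * (b - a)) * f a := by
  set g : ℝ → ℝ := fun t => f t * exp (-c * t)
  have hg : ∀ x ∈ Ioo a b,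
      HasDerivWithinAt g ((deriv f x - c * f x) * exp (-c * x)) (Ioo a b) x := by
    intro x hx
    have hfx := (hdiff.differentiableAt (isOpen_Ioo.mem_nhds hx)).hasDerivAt
    have hweight := ((hasDerivAt_id' x).const_mul (-c)).exp
    exact (hfx.mul hweight).hasDerivWithinAt.congr_deriv (by ring)
  have hanti : AntitoneOn g (Icc a b) := by
    refine antitoneOn_of_hasDerivWithinAt_nonpos (convex_Icc a b)
      (f' := fun x => (deriv f x - c * f x) * exp (-c * x)) ?_ ?_ ?_
    · exact hcont.mul (by fun_prop)
    · simpa only [interior_Icc] using hg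
    · intro x hx
      rw [interior_Icc] at hx
      exact mul_nonpos_of_nonpos_of_nonneg (sub_nonpos.2 (hderiv x hx)) (exp_pos _).le
  have hgab : f b * exp (-c * b) ≤ f a * exp (-c * a) :=
    hanti ⟨le_rfl, hab⟩ ⟨hab, le_rfl⟩ hab
  calc f b = f b * exp (-c * b) * exp (c * b) := by
        rw [mul_assoc, ← exp_add, neg_mul, neg_add_cancel, exp_zero, mul_one]
    _ ≤ f a * exp (-c * a) * exp (c * b) := by gcongr
    _ = exp (c * (b - a)) * f a := by
        rw [mul_assoc, ← exp_add, mul_comm]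
        ring_nf

theorem neg_mul_add_mul_mul_sqrt_le {lam K w : ℝ} (hlam : 0 ≤ lam) (hK : 0 < K) (hw : 0 ≤ w)
    (hsmall : w ≤ (lam / (2 * K)) ^ 2) :
    -lam * w + K * (w * sqrt w) ≤ -(lam / 2) * w := by
  have hsqrt : sqrt w ≤ lam / (2 * K) := by
    simpa only [sqrt_sq (by positivity : 0 ≤ lam / (2 * K))] using sqrt_le_sqrt hsmall
  have hKsqrt : K * sqrt w ≤ lam / 2 := by
    calc K * sqrt w ≤ K * (lam / (2 * K)) := by gcongr
      _ = lam / 2 := by field_simp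
  nlinarith [mul_le_mul_of_nonneg_left hKsqrt hw]

theorem forall_lt_of_forall_Ico_lt {f : ℝ → ℝ} {a B : ℝ} (hf : ContinuousOn f (Ici a))
    (h : ∀ s, a ≤ s → (∀ x ∈ Ico a s, f x < B) → f s < B) :
    ∀ t, a ≤ t → f t < B := by
  by_contra! hexit
  set S : Set ℝ := Ici a ∩ f ⁻¹' Ici B
  have hSne : S.Nonempty := let ⟨t, ht, hBt⟩ := hexit; ⟨t, ht, hBt⟩
  have hSbdd : BddBelow S := ⟨a, fun x hx => hx.1⟩
  have hSclosed : IsClosed S := hf.preimage_isClosed_of_isClosed isClosed_Ici isClosed_Ici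
  obtain ⟨has, hBs⟩ : sInf S ∈ S := hSclosed.csInf_mem hSne hSbdd
  refine (h (sInf S) has fun x hx => ?_).not_ge hBs
  by_contra! hBx
  exact (csInf_le hSbdd ⟨hx.1, hBx⟩).not_gt hx.2

theorem local_exponential_stability_cubic_perturbed
    (W : ℝ → ℝ) (lam K : ℝ) (hlam : 0 < lam) (hK : 0 < K)
    (hdiff : Differentiable ℝ W)
    (hnonneg : ∀ t, 0 ≤ t → 0 ≤ W t)
    (hineq : ∀ t, 0 ≤ t → deriv W t ≤ -lam * W t + K * (W t * Real.sqrt (W t)))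
    (hsmall : W 0 < (lam / (2 * K)) ^ 2) :
    ∀ t, 0 ≤ t → W t ≤ Real.exp (-lam * t / 2) * W 0 := by
  have hdecay : ∀ t, 0 ≤ t → (∀ x ∈ Ico 0 t, W x < (lam / (2 * K)) ^ 2) →
      W t ≤ exp (-lam * t / 2) * W 0 := by
    intro t ht hbelow
    have hrate : ∀ x ∈ Ioo 0 t, deriv W x ≤ -(lam / 2) * W x := fun x hx =>
      (hineq x hx.1.le).trans <| neg_mul_add_mul_mul_sqrt_le hlam.le hK (hnonneg x hx.1.le)
        (hbelow x (Ioo_subset_Ico_self hx)).le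
    convert le_exp_mul_sub_mul_of_deriv_le ht hdiff.continuous.continuousOn
      hdiff.differentiableOn hrate using 3
    ring
  have htrapped : ∀ t, 0 ≤ t → W t < (lam / (2 * K)) ^ 2 := by
    refine forall_lt_of_forall_Ico_lt hdiff.continuous.continuousOn fun s hs hbelow => ?_
    calc W s ≤ exp (-lam * s / 2) * W 0 := hdecay s hs hbelow
      _ ≤ W 0 := mul_le_of_le_one_left (hnonneg 0 le_rfl) (exp_le_one_iff.2 (by nlinarith))
      _ < _ := hsmall
  exact fun t ht => hdecay t ht fun x hx => htrapped x hx.1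
end

section
/- Let Λ(x) = diag(Λ_1(x),…,Λ_n(x)) be a C¹ diagonal matrix on [0,1] with Λ_i(x) ≠ Λ_j(x) for all i ≠ j and all x. Then there exist η > 0 and a C^∞ map 𝒩 from the set {M : [0,1] → ℝ^{n×n} continuous, ‖M − Λ‖_{C⁰} < η} into symmetric-matrix-valued functions such that 𝒩(M(x)) M(x) − M(x)ᵀ 𝒩(M(x)) = 0 for all x, and 𝒩(Λ) equals any prescribed C¹ diagonal matrix D(x) with nonvanishing diagonal entries. -/
open Set Matrix

attribute [local instance] Matrix.normedAddCommGroup Matrix.normedSpace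

def symmL (n : ℕ) (M : Matrix (Fin n) (Fin n) ℝ) :
    Matrix (Fin n × Fin n) (Fin n × Fin n) ℝ :=
  Matrix.of fun p q =>
    if p.1 = p.2 then (if q = p then 1 else 0)
    else if p.1 < p.2 then
      (if q.1 = p.1 then M q.2 p.2 else 0) - (if q.2 = p.2 then M q.1 p.1 else 0)
    else (if q = p then 1 else 0) - (if q = (p.2, p.1) then 1 else 0)

lemma symmL_mulVec {n : ℕ} (M R : Matrix (Fin n) (Fin n) ℝ) (p : Fin n × Fin n) :
    (symmL n M).mulVec (fun q => R q.1 q.2) p =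
      if p.1 = p.2 then R p.1 p.2
      else if p.1 < p.2 then (R * M - Mᵀ * R) p.1 p.2
      else R p.1 p.2 - R p.2 p.1 := by
  classical
  rcases p with ⟨i, j⟩
  by_cases hij : i = j
  · simp [symmL, Matrix.mulVec, dotProduct, hij, ite_mul]
  · by_cases hlt : i < j
    · simp only [symmL, Matrix.mulVec, dotProduct, Matrix.of_apply, hij, hlt, if_true, if_false,
        sub_mul, Finset.sum_sub_distrib, ite_mul, zero_mul, Fintype.sum_prod_type]
      simp only [Finset.sum_ite_irrel, Finset.sum_const_zero, Finset.sum_ite_eq,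
        Finset.sum_ite_eq', Finset.mem_univ, if_true, Matrix.sub_apply, Matrix.mul_apply,
        Matrix.transpose_apply]
      congr 1
      · exact Finset.sum_congr rfl fun b _ => mul_comm _ _
    · simp [symmL, Matrix.mulVec, dotProduct, hij, hlt, sub_mul, Finset.sum_sub_distrib, ite_mul,
        Finset.sum_ite_eq]

lemma symmL_det_ne_zero {n : ℕ} (lam : Fin n → ℝ)
    (h : ∀ i j : Fin n, i ≠ j → lam i ≠ lam j) :
    (symmL n (Matrix.diagonal lam)).det ≠ 0 := by
  classical
  intro hdet
  obtain ⟨v, hv0, hv⟩ := Matrix.exists_mulVec_eq_zero_iff.mpr hdet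
  apply hv0
  set R : Matrix (Fin n) (Fin n) ℝ := Matrix.of fun i j => v (i, j) with hR
  have hvR : (fun q : Fin n × Fin n => R q.1 q.2) = v := by funext q; rfl
  have key : ∀ p : Fin n × Fin n,
      (if p.1 = p.2 then R p.1 p.2
      else if p.1 < p.2 then (R * Matrix.diagonal lam - (Matrix.diagonal lam)ᵀ * R) p.1 p.2
      else R p.1 p.2 - R p.2 p.1) = 0 := by
    intro p
    rw [← symmL_mulVec, hvR, hv]; rfl
  have hRlt : ∀ i j : Fin n, i < j → R i j = 0 := by
    intro i j hlt
    have := key (i, j)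
    simp only [ne_eq, hlt.ne, if_false, hlt, if_true] at this
    rw [Matrix.sub_apply, Matrix.diagonal_transpose, Matrix.mul_diagonal,
      Matrix.diagonal_mul] at this
    have hne : lam j - lam i ≠ 0 := sub_ne_zero.mpr (h j i hlt.ne' )
    have : R i j * (lam j - lam i) = 0 := by ring_nf; ring_nf at this; linarith
    rcases mul_eq_zero.mp this with h1 | h1
    · exact h1
    · exact absurd h1 hne
  have hRall : ∀ i j : Fin n, R i j = 0 := by
    intro i j
    rcases lt_trichotomy i j with hlt | heq | hgt
    · exact hRlt i j hlt
    · have := key (i, j); simpa [heq] using this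
    · have := key (i, j)
      simp only [ne_eq, hgt.ne', if_false, not_lt.mpr hgt.le] at this
      have h2 := hRlt j i hgt
      rw [sub_eq_zero] at this
      rw [this, h2]
  funext q
  have := hRall q.1 q.2
  simpa [hR] using this

noncomputable def symmN (n : ℕ) (d : Fin n → ℝ) (M : Matrix (Fin n) (Fin n) ℝ) :
    Matrix (Fin n) (Fin n) ℝ :=
  Matrix.of fun i j =>
    (symmL n M)⁻¹.mulVec (fun p => if p.1 = p.2 then d p.1 else 0) (i, j)

lemma symmN_eq {n : ℕ} (d : Fin n → ℝ) (M : Matrix (Fin n) (Fin n) ℝ)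
    (h : (symmL n M).det ≠ 0) (p : Fin n × Fin n) :
    (if p.1 = p.2 then symmN n d M p.1 p.2
      else if p.1 < p.2 then (symmN n d M * M - Mᵀ * symmN n d M) p.1 p.2
      else symmN n d M p.1 p.2 - symmN n d M p.2 p.1)
      = (if p.1 = p.2 then d p.1 else 0) := by
  rw [← symmL_mulVec]
  have hvec : (fun q : Fin n × Fin n => symmN n d M q.1 q.2)
      = (symmL n M)⁻¹.mulVec (fun p => if p.1 = p.2 then d p.1 else 0) := by
    funext q; rfl
  rw [hvec, Matrix.mulVec_mulVec, Matrix.mul_nonsing_inv _ (isUnit_iff_ne_zero.mpr h),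
    Matrix.one_mulVec]

lemma symmN_isSymm {n : ℕ} (d : Fin n → ℝ) (M : Matrix (Fin n) (Fin n) ℝ)
    (h : (symmL n M).det ≠ 0) : (symmN n d M).IsSymm := by
  rw [Matrix.IsSymm]
  ext i j
  rw [Matrix.transpose_apply]
  rcases lt_trichotomy i j with hlt | heq | hgt
  · have := symmN_eq d M h (j, i)
    simp only [hlt.ne', if_false, hlt.not_gt, if_false] at this
    linarith [sub_eq_zero.mp this]
  · rw [heq]
  · have := symmN_eq d M h (i, j)
    simp only [hgt.ne', if_false, hgt.not_gt, if_false] at this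
    exact (sub_eq_zero.mp this).symm

lemma symmN_symmetrizes {n : ℕ} (d : Fin n → ℝ) (M : Matrix (Fin n) (Fin n) ℝ)
    (h : (symmL n M).det ≠ 0) :
    symmN n d M * M - Mᵀ * symmN n d M = 0 := by
  have hsymm := symmN_isSymm d M h
  set R := symmN n d M with hRdef
  have hsym : ∀ a b, R a b = R b a := fun a b => (Matrix.IsSymm.apply hsymm b a)
  have hlt : ∀ i j : Fin n, i < j → (R * M - Mᵀ * R) i j = 0 := by
    intro i j hlt
    have := symmN_eq d M h (i, j)
    simpa [hlt.ne, hlt] using this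
  have hanti : ∀ i j : Fin n, (R * M - Mᵀ * R) i j = -((R * M - Mᵀ * R) j i) := by
    intro i j
    simp only [Matrix.sub_apply, Matrix.mul_apply, Matrix.transpose_apply, neg_sub]
    congr 1
    · exact Finset.sum_congr rfl fun k _ => by rw [hsym i k, mul_comm]
    · exact Finset.sum_congr rfl fun k _ => by rw [hsym j k, mul_comm]
  ext i j
  rw [Matrix.zero_apply]
  rcases lt_trichotomy i j with h1 | h1 | h1
  · exact hlt i j h1
  · subst h1
    rw [hanti i i]
    linarith [hanti i i]
  · rw [hanti i j, hlt j i h1, neg_zero]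

lemma symmN_diagonal {n : ℕ} (d lam : Fin n → ℝ)
    (h : (symmL n (Matrix.diagonal lam)).det ≠ 0) :
    symmN n d (Matrix.diagonal lam) = Matrix.diagonal d := by
  classical
  set A := symmL n (Matrix.diagonal lam) with hA
  have hmul : A.mulVec (fun q : Fin n × Fin n => Matrix.diagonal d q.1 q.2)
      = fun p : Fin n × Fin n => if p.1 = p.2 then d p.1 else 0 := by
    funext p
    rw [symmL_mulVec]
    rcases p with ⟨i, j⟩
    by_cases hij : i = j
    · simp [hij]
    · by_cases hlt : i < j
      · simp [hij, hlt, Matrix.diagonal_mul_diagonal, Matrix.diagonal_apply_ne _ hij,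
          mul_comm]
      · simp [hij, hlt, Matrix.diagonal_apply_ne _ hij,
          Matrix.diagonal_apply_ne _ (fun hh : j = i => hij hh.symm)]
  ext i j
  have : (fun q : Fin n × Fin n => symmN n d (Matrix.diagonal lam) q.1 q.2)
      = A⁻¹.mulVec (fun p : Fin n × Fin n => if p.1 = p.2 then d p.1 else 0) := by
    funext q; rfl
  have h2 : (fun q : Fin n × Fin n => symmN n d (Matrix.diagonal lam) q.1 q.2)
      = (fun q : Fin n × Fin n => Matrix.diagonal d q.1 q.2) := by
    rw [this, ← hmul, Matrix.mulVec_mulVec, Matrix.nonsing_inv_mul _ (isUnit_iff_ne_zero.mpr h),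
      Matrix.one_mulVec]
  exact congrFun h2 (i, j)

section Smooth

variable {E : Type*} [NormedAddCommGroup E] [NormedSpace ℝ E]
variable {ι : Type*} [Fintype ι] [DecidableEq ι]

lemma contDiff_matrix_det {f : E → Matrix ι ι ℝ}
    (hf : ∀ a b, ContDiff ℝ (⊤ : ℕ∞) fun x => f x a b) :
    ContDiff ℝ (⊤ : ℕ∞) fun x => (f x).det := by
  simp only [Matrix.det_apply']
  exact ContDiff.sum fun σ _ => contDiff_const.mul (contDiff_prod fun i _ => hf (σ i) i)

lemma contDiff_matrix_adjugate {f : E → Matrix ι ι ℝ}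
    (hf : ∀ a b, ContDiff ℝ (⊤ : ℕ∞) fun x => f x a b) (a b : ι) :
    ContDiff ℝ (⊤ : ℕ∞) fun x => (f x).adjugate a b := by
  simp only [Matrix.adjugate_apply]
  apply contDiff_matrix_det
  intro a' b'
  simp only [Matrix.updateRow_apply]
  split_ifs
  · exact contDiff_const
  · exact hf a' b'

lemma contDiff_entry {n : ℕ} (a b : Fin n) :
    ContDiff ℝ (⊤ : ℕ∞) (fun M : Matrix (Fin n) (Fin n) ℝ => M a b) :=
  contDiff_pi.mp (contDiff_pi.mp contDiff_id a) b

lemma contDiff_symmL_entry {n : ℕ} (p q : Fin n × Fin n) :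
    ContDiff ℝ (⊤ : ℕ∞) (fun M : Matrix (Fin n) (Fin n) ℝ => symmL n M p q) := by
  unfold symmL
  simp only [Matrix.of_apply]
  split_ifs <;>
    first
      | exact contDiff_const
      | exact (contDiff_entry _ _).sub (contDiff_entry _ _)
      | exact (contDiff_entry _ _).sub contDiff_const
      | exact contDiff_const.sub (contDiff_entry _ _)
      | exact contDiff_const.sub contDiff_const

lemma contDiffAt_symmN {n : ℕ} (d : Fin n → ℝ) (M0 : Matrix (Fin n) (Fin n) ℝ)
    (h : (symmL n M0).det ≠ 0) :
    ContDiffAt ℝ (⊤ : ℕ∞) (symmN n d) M0 := by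
  have hdet : ContDiff ℝ (⊤ : ℕ∞) fun M : Matrix (Fin n) (Fin n) ℝ => (symmL n M).det :=
    contDiff_matrix_det fun a b => contDiff_symmL_entry a b
  have hinv : ∀ p q, ContDiffAt ℝ (⊤ : ℕ∞)
      (fun M : Matrix (Fin n) (Fin n) ℝ => (symmL n M)⁻¹ p q) M0 := by
    intro p q
    have heq : (fun M : Matrix (Fin n) (Fin n) ℝ => (symmL n M)⁻¹ p q)
        = fun M => ((symmL n M).det)⁻¹ * (symmL n M).adjugate p q := by
      funext M
      rw [Matrix.inv_def, Matrix.smul_apply, Ring.inverse_eq_inv', smul_eq_mul]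
    rw [heq]
    exact (((contDiffAt_inv ℝ h).comp M0 hdet.contDiffAt).mul
      ((contDiff_matrix_adjugate (fun a b => contDiff_symmL_entry a b) p q).contDiffAt))
  apply contDiffAt_pi.mpr
  intro i
  apply contDiffAt_pi.mpr
  intro j
  have heq : (fun M => symmN n d M i j)
      = fun M : Matrix (Fin n) (Fin n) ℝ =>
        ∑ q : Fin n × Fin n, (symmL n M)⁻¹ (i, j) q * (if q.1 = q.2 then d q.1 else 0) := by
    funext M
    rfl
  rw [heq]
  exact ContDiffAt.sum fun q _ => (hinv (i, j) q).mul contDiffAt_const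

end Smooth

theorem smooth_symmetrizer_near_diagonal (n : ℕ)
    (Λ : ℝ → Fin n → ℝ)
    (hΛC1 : ∀ i, ContDiffOn ℝ 1 (fun x => Λ x i) (Icc 0 1))
    (hdistinct : ∀ x ∈ Icc (0:ℝ) 1, ∀ i j : Fin n, i ≠ j → Λ x i ≠ Λ x j)
    (D : ℝ → Fin n → ℝ)
    (hDC1 : ∀ i, ContDiffOn ℝ 1 (fun x => D x i) (Icc 0 1))
    (hDne : ∀ x ∈ Icc (0:ℝ) 1, ∀ i, D x i ≠ 0) :
    ∃ η > 0, ∃ 𝒩 : ℝ → Matrix (Fin n) (Fin n) ℝ → Matrix (Fin n) (Fin n) ℝ,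
      ∀ x ∈ Icc (0:ℝ) 1,
        ContDiffOn ℝ (⊤ : ℕ∞) (𝒩 x) (Metric.ball (Matrix.diagonal (Λ x)) η) ∧
        𝒩 x (Matrix.diagonal (Λ x)) = Matrix.diagonal (D x) ∧
        ∀ M ∈ Metric.ball (Matrix.diagonal (Λ x)) η,
          ((𝒩 x M).IsSymm ∧ 𝒩 x M * M - Mᵀ * 𝒩 x M = 0) := by
  classical
  -- the open set of good matrices
  set U : Set (Matrix (Fin n) (Fin n) ℝ) := {M | (symmL n M).det ≠ 0} with hU
  have hdetC : Continuous fun M : Matrix (Fin n) (Fin n) ℝ => (symmL n M).det :=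
    (contDiff_matrix_det fun a b => contDiff_symmL_entry a b).continuous
  have hUopen : IsOpen U := isOpen_compl_singleton.preimage hdetC
  -- the compact set of diagonal matrices
  have hdiagC : ContinuousOn (fun x : ℝ => Matrix.diagonal (Λ x)) (Icc 0 1) := by
    apply continuousOn_pi.mpr
    intro i
    apply continuousOn_pi.mpr
    intro j
    by_cases hij : i = j
    · subst hij
      simpa [Matrix.diagonal_apply_eq] using (hΛC1 i).continuousOn
    · simpa [Matrix.diagonal_apply_ne _ hij] using continuousOn_const
  set K : Set (Matrix (Fin n) (Fin n) ℝ) :=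
    (fun x : ℝ => Matrix.diagonal (Λ x)) '' (Icc 0 1) with hK
  have hKcpt : IsCompact K := (isCompact_Icc).image_of_continuousOn hdiagC
  have hKU : K ⊆ U := by
    rintro _ ⟨x, hx, rfl⟩
    exact symmL_det_ne_zero (Λ x) (hdistinct x hx)
  obtain ⟨η, hη, hthick⟩ := hKcpt.exists_thickening_subset_open hUopen hKU
  refine ⟨η, hη, fun x M => symmN n (D x) M, fun x hx => ?_⟩
  have hball : ∀ M ∈ Metric.ball (Matrix.diagonal (Λ x)) η, (symmL n M).det ≠ 0 := by
    intro M hM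
    exact hthick (Metric.ball_subset_thickening (Set.mem_image_of_mem _ hx) η hM)
  refine ⟨?_, ?_, ?_⟩
  · intro M hM
    exact (contDiffAt_symmN (D x) M (hball M hM)).contDiffWithinAt
  · exact symmN_diagonal (D x) (Λ x) (symmL_det_ne_zero (Λ x) (hdistinct x hx))
  · intro M hM
    exact ⟨symmN_isSymm (D x) M (hball M hM), symmN_symmetrizes (D x) M (hball M hM)⟩
end
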